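/- Tensor-vector decomposition lemma: there exist ε* > 0, a finite family of unit vectors η^1,…,η^N ∈ S¹ ∩ ℚ², smooth positive functions Γ_m : B_{ε*}(Id) × ℝ² → (0,∞), and a smooth function p : B_{ε*}(Id) × ℝ² → ℝ such that for every symmetric 2×2 matrix R with |R − Id| < ε* and every g ∈ ℝ², one has R − p(R,g) Id = Σ_{m=1}^N Γ_m(R,g)² η^{m,⊥} ⊗ η^{m,⊥} and g = Σ_{m=1}^N Γ_m(R,g) η^{m,⊥}. -/

import Mathlib

attribute [local instance] Matrix.normedAddCommGroup Matrix.normedSpace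

/-- Rotation by π/2 of a vector in ℝ², as a function `Fin 2 → ℝ`. -/
def perp2 (v : Fin 2 → ℝ) : Fin 2 → ℝ := ![-(v 1), v 0]

/-- The rank-one matrix `v ⊗ v`. -/
def outer2 (v : Fin 2 → ℝ) : Matrix (Fin 2) (Fin 2) ℝ := fun i j => v i * v j

/-- `v` is a unit vector with rational coordinates. -/
def IsRationalUnit (v : Fin 2 → ℝ) : Prop :=
  v 0 ^ 2 + v 1 ^ 2 = 1 ∧ ∃ q₀ q₁ : ℚ, v 0 = q₀ ∧ v 1 = q₁

abbrev M2' := Matrix (Fin 2) (Fin 2) ℝ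
abbrev V2' := Fin 2 → ℝ

noncomputable def phi (t : ℝ) : ℝ := (t + Real.sqrt (t ^ 2 + 1)) / 2

lemma abs_lt_sqrt (t : ℝ) : |t| < Real.sqrt (t ^ 2 + 1) := by
  have : |t| = Real.sqrt (t ^ 2) := (Real.sqrt_sq_eq_abs t).symm
  rw [this]
  exact Real.sqrt_lt_sqrt (by positivity) (by linarith)

lemma phi_pos (t : ℝ) : 0 < phi t := by
  have := abs_lt_sqrt t
  have := neg_abs_le t
  unfold phi; linarith

lemma phi_sub (t : ℝ) : phi t - phi (-t) = t := by
  unfold phi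
  rw [show (-t : ℝ) ^ 2 + 1 = t ^ 2 + 1 by ring]
  ring

lemma phi_sq (t : ℝ) : phi t ^ 2 + phi (-t) ^ 2 = t ^ 2 + 1 / 2 := by
  have hs : Real.sqrt (t ^ 2 + 1) ^ 2 = t ^ 2 + 1 := Real.sq_sqrt (by positivity)
  unfold phi
  rw [show (-t : ℝ) ^ 2 + 1 = t ^ 2 + 1 by ring]
  linear_combination hs / 2

lemma contDiff_phi : ContDiff ℝ (⊤ : ℕ∞) phi := by
  have h : ContDiff ℝ (⊤ : ℕ∞) fun t : ℝ => Real.sqrt (t ^ 2 + 1) :=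
    ((contDiff_id.pow 2).add contDiff_const).sqrt (fun t => by positivity)
  exact (contDiff_id.add h).div_const 2

noncomputable def lam' (εu : ℝ) (g : V2') : ℝ :=
  (2 / εu) * (1 + Real.sqrt (1 + ((g 0 ^ 2 - g 1 ^ 2) / 2) ^ 2))

noncomputable def pf' (εu : ℝ) (g : V2') : ℝ :=
  -(lam' εu g - 1) - (g 0 ^ 2 + g 1 ^ 2 + 1) / 2

noncomputable def Gmat' (g : V2') : M2' :=
  g 0 ^ 2 • (!![1,0;0,0] : M2') + g 1 ^ 2 • (!![0,0;0,1] : M2') + (!![1/2,0;0,1/2] : M2')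

noncomputable def Rp' (εu : ℝ) (R : M2') (g : V2') : M2' :=
  (lam' εu g)⁻¹ • (R - Gmat' g - pf' εu g • 1)

lemma lam'_pos {εu : ℝ} (hεu : 0 < εu) (g : V2') : 0 < lam' εu g := by
  have h := Real.sqrt_nonneg (1 + ((g 0 ^ 2 - g 1 ^ 2) / 2) ^ 2)
  have h2 : (0:ℝ) < 2 / εu := by positivity
  unfold lam'; nlinarith

lemma Gmat2_symm (g : V2') : (Gmat' g).transpose = Gmat' g := by
  ext i j
  fin_cases i <;> fin_cases j <;>
    simp [Gmat', Matrix.transpose_apply, Matrix.add_apply, Matrix.smul_apply]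

lemma Rp'_symm {εu : ℝ} {R : M2'} (hR : R.IsSymm) (g : V2') : (Rp' εu R g).IsSymm := by
  unfold Matrix.IsSymm Rp'
  rw [Matrix.transpose_smul, Matrix.transpose_sub, Matrix.transpose_sub,
    Matrix.transpose_smul, Matrix.transpose_one, Gmat2_symm, hR]

lemma key_alg (εu : ℝ) (R : M2') (g : V2') :
    R - Gmat' g - pf' εu g • (1 : M2') - lam' εu g • (1 : M2') =
      (R - 1) - Matrix.of ![![(g 0 ^ 2 - g 1 ^ 2)/2, 0], ![0, -((g 0 ^ 2 - g 1 ^ 2)/2)]] := by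
  ext i j
  fin_cases i <;> fin_cases j <;>
    simp [Gmat', pf', Matrix.sub_apply, Matrix.add_apply, Matrix.smul_apply,
      Matrix.one_apply] <;> ring

lemma norm_Rp' {εu : ℝ} (hεu : 0 < εu) {R : M2'} (g : V2')
    (hR : ‖R - 1‖ < min εu 1) : ‖Rp' εu R g - 1‖ < εu := by
  set d : ℝ := (g 0 ^ 2 - g 1 ^ 2) / 2 with hd
  set h : ℝ := Real.sqrt (1 + d ^ 2) with hh
  have hh0 : 0 ≤ h := Real.sqrt_nonneg _
  have hdh : |d| ≤ h := by
    rw [hh]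
    calc |d| = Real.sqrt (d ^ 2) := by rw [Real.sqrt_sq_eq_abs]
    _ ≤ Real.sqrt (1 + d ^ 2) := Real.sqrt_le_sqrt (by linarith)
  have hl : 0 < lam' εu g := lam'_pos hεu g
  have hlne : lam' εu g ≠ 0 := ne_of_gt hl
  have keysmul : ∀ (c : ℝ) (X : M2'), c ≠ 0 → c⁻¹ • (X - c • (1:M2')) = c⁻¹ • X - 1 := by
    intro c X hc; rw [smul_sub, smul_smul, inv_mul_cancel₀ hc, one_smul]
  have step : Rp' εu R g - 1 = (lam' εu g)⁻¹ •
      ((R - 1) - Matrix.of ![![d, 0], ![0, -d]]) := by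
    rw [← key_alg εu R g, keysmul _ _ hlne]; rfl
  have hDnorm : ‖(Matrix.of ![![d, 0], ![0, -d]] : M2')‖ ≤ h := by
    rw [Matrix.norm_le_iff hh0]
    intro i j
    fin_cases i <;> fin_cases j <;>
      simp [Real.norm_eq_abs, abs_neg, hdh, hh0]
  have hXnorm : ‖(R - 1) - Matrix.of ![![d, 0], ![0, -d]]‖ < 1 + h := by
    calc ‖(R - 1) - Matrix.of ![![d, 0], ![0, -d]]‖
        ≤ ‖R - 1‖ + ‖(Matrix.of ![![d, 0], ![0, -d]] : M2')‖ := norm_sub_le _ _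
    _ < 1 + h := by
        have := lt_of_lt_of_le hR (min_le_right εu 1)
        linarith
  rw [step, norm_smul, Real.norm_eq_abs, abs_of_pos (inv_pos.2 hl)]
  have hs : lam' εu g = 2 / εu * (1 + h) := by rw [hh, hd]; rfl
  have h1h : (0:ℝ) < 1 + h := by linarith
  have hlam : (lam' εu g)⁻¹ * (1 + h) = εu / 2 := by
    rw [hs]
    field_simp
  calc (lam' εu g)⁻¹ * ‖(R - 1) - Matrix.of ![![d, 0], ![0, -d]]‖
      < (lam' εu g)⁻¹ * (1 + h) := mul_lt_mul_of_pos_left hXnorm (inv_pos.2 hl)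
  _ = εu / 2 := hlam
  _ < εu := by linarith

lemma reconstruct' {εu : ℝ} (hεu : 0 < εu) (R : M2') (g : V2') :
    lam' εu g • Rp' εu R g = R - Gmat' g - pf' εu g • 1 :=
  smul_inv_smul₀ (ne_of_gt (lam'_pos hεu g)) _

lemma cd_snd_apply (i : Fin 2) : ContDiff ℝ (⊤ : ℕ∞) (fun z : M2' × V2' => z.2 i) := by
  have h : ContDiff ℝ (⊤ : ℕ∞) (fun v : V2' => v i) :=
    (ContinuousLinearMap.proj (R := ℝ) (φ := fun _ : Fin 2 => ℝ) i).contDiff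
  exact h.comp contDiff_snd

lemma cd_lam (εu : ℝ) : ContDiff ℝ (⊤ : ℕ∞) (fun z : M2' × V2' => lam' εu z.2) := by
  have h0 := cd_snd_apply 0
  have h1 := cd_snd_apply 1
  have hin : ContDiff ℝ (⊤ : ℕ∞) (fun z : M2' × V2' => ((z.2 0 ^ 2 - z.2 1 ^ 2) / 2)) :=
    ((h0.pow 2).sub (h1.pow 2)).div_const 2
  have hs : ContDiff ℝ (⊤ : ℕ∞) (fun z : M2' × V2' =>
      Real.sqrt (1 + ((z.2 0 ^ 2 - z.2 1 ^ 2) / 2) ^ 2)) :=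
    (contDiff_const.add (hin.pow 2)).sqrt (fun z => by positivity)
  exact contDiff_const.mul (contDiff_const.add hs)

lemma cd_pf (εu : ℝ) : ContDiff ℝ (⊤ : ℕ∞) (fun z : M2' × V2' => pf' εu z.2) := by
  have h0 := cd_snd_apply 0
  have h1 := cd_snd_apply 1
  exact ((cd_lam εu).sub contDiff_const).neg.sub
    (((h0.pow 2).add (h1.pow 2) |>.add contDiff_const).div_const 2)

lemma cd_Gmat : ContDiff ℝ (⊤ : ℕ∞) (fun z : M2' × V2' => Gmat' z.2) := by
  have h0 := cd_snd_apply 0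
  have h1 := cd_snd_apply 1
  exact (((h0.pow 2).smul contDiff_const).add ((h1.pow 2).smul contDiff_const)).add
    contDiff_const

lemma cd_Rp {εu : ℝ} (hεu : 0 < εu) : ContDiff ℝ (⊤ : ℕ∞) (fun z : M2' × V2' => Rp' εu z.1 z.2) := by
  have hinv : ContDiff ℝ (⊤ : ℕ∞) (fun z : M2' × V2' => (lam' εu z.2)⁻¹) :=
    (cd_lam εu).inv (fun z => ne_of_gt (lam'_pos hεu z.2))
  exact hinv.smul ((contDiff_fst.sub cd_Gmat).sub ((cd_pf εu).smul contDiff_const))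

lemma perp2_neg (v : V2') : perp2 (-v) = -perp2 v := by
  funext i
  fin_cases i <;> simp [perp2]

lemma outer2_neg (v : V2') : outer2 (-v) = outer2 v := by
  ext i j
  simp [outer2]

/-- The four auxiliary directions together with the doubled geometric directions. -/
noncomputable def eta0 {K : ℕ} (ξ : Fin K → V2') : Fin 4 ⊕ (Fin K ⊕ Fin K) → V2' :=
  Sum.elim ![![0,-1], ![0,1], ![1,0], ![-1,0]] (Sum.elim ξ (fun m => -ξ m))

noncomputable def gam0 (εu : ℝ) {K : ℕ} (A : Fin K → M2' → ℝ) :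
    Fin 4 ⊕ (Fin K ⊕ Fin K) → M2' × V2' → ℝ :=
  Sum.elim
    ![fun z => phi (z.2 0), fun z => phi (-z.2 0),
      fun z => phi (z.2 1), fun z => phi (-z.2 1)]
    (Sum.elim (fun m z => Real.sqrt (lam' εu z.2 / 2) * A m (Rp' εu z.1 z.2))
              (fun m z => Real.sqrt (lam' εu z.2 / 2) * A m (Rp' εu z.1 z.2)))

lemma pp1 : perp2 ![0,-1] = ![1,0] := by funext i; fin_cases i <;> norm_num [perp2]
lemma pp2 : perp2 ![0,1] = ![-1,0] := by funext i; fin_cases i <;> norm_num [perp2]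
lemma pp3 : perp2 ![1,0] = ![0,1] := by funext i; fin_cases i <;> norm_num [perp2]
lemma pp4 : perp2 ![-1,0] = ![0,-1] := by funext i; fin_cases i <;> norm_num [perp2]

lemma op1 : outer2 (perp2 ![0,-1]) = !![1,0;0,0] := by
  rw [pp1]; ext i j; fin_cases i <;> fin_cases j <;> norm_num [outer2]
lemma op2 : outer2 (perp2 ![0,1]) = !![1,0;0,0] := by
  rw [pp2]; ext i j; fin_cases i <;> fin_cases j <;> norm_num [outer2]
lemma op3 : outer2 (perp2 ![1,0]) = !![0,0;0,1] := by
  rw [pp3]; ext i j; fin_cases i <;> fin_cases j <;> norm_num [outer2]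
lemma op4 : outer2 (perp2 ![-1,0]) = !![0,0;0,1] := by
  rw [pp4]; ext i j; fin_cases i <;> fin_cases j <;> norm_num [outer2]

/-- Tensor-vector decomposition lemma.  Assuming the standard symmetric geometric
lemma (the hypothesis), there exist `ε* > 0`, finitely many rational unit
directions `η^1, …, η^N`, smooth positive coefficients `Γ_m` and a smooth scalar
`p` such that every symmetric `R` with `‖R − Id‖ < ε*` and every `g ∈ ℝ²`
decompose simultaneously as
`R − p(R,g) Id = Σ_m Γ_m(R,g)² η^{m,⊥} ⊗ η^{m,⊥}` and
`g = Σ_m Γ_m(R,g) η^{m,⊥}`. -/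
theorem stmt4
    (geom : ∃ εu : ℝ, 0 < εu ∧ ∃ K : ℕ, ∃ ξ : Fin K → (Fin 2 → ℝ),
      (∀ m, IsRationalUnit (ξ m)) ∧
      ∃ A : Fin K → Matrix (Fin 2) (Fin 2) ℝ → ℝ,
        (∀ m, ContDiff ℝ (⊤ : ℕ∞) (A m)) ∧
        (∀ m R, R.IsSymm → ‖R - (1 : Matrix (Fin 2) (Fin 2) ℝ)‖ < εu → 0 < A m R) ∧
        (∀ R : Matrix (Fin 2) (Fin 2) ℝ, R.IsSymm →
          ‖R - (1 : Matrix (Fin 2) (Fin 2) ℝ)‖ < εu →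
          R = ∑ m, (A m R) ^ 2 • outer2 (perp2 (ξ m)))) :
    ∃ εstar : ℝ, 0 < εstar ∧ ∃ N : ℕ, ∃ η : Fin N → (Fin 2 → ℝ),
      (∀ m, IsRationalUnit (η m)) ∧
      ∃ Γ : Fin N → Matrix (Fin 2) (Fin 2) ℝ × (Fin 2 → ℝ) → ℝ,
      ∃ p : Matrix (Fin 2) (Fin 2) ℝ × (Fin 2 → ℝ) → ℝ,
        (∀ m, ContDiff ℝ (⊤ : ℕ∞) (Γ m)) ∧ ContDiff ℝ (⊤ : ℕ∞) p ∧
        (∀ m (R : Matrix (Fin 2) (Fin 2) ℝ) (g : Fin 2 → ℝ), R.IsSymm →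
          ‖R - (1 : Matrix (Fin 2) (Fin 2) ℝ)‖ < εstar → 0 < Γ m (R, g)) ∧
        (∀ (R : Matrix (Fin 2) (Fin 2) ℝ) (g : Fin 2 → ℝ), R.IsSymm →
          ‖R - (1 : Matrix (Fin 2) (Fin 2) ℝ)‖ < εstar →
          R - p (R, g) • (1 : Matrix (Fin 2) (Fin 2) ℝ) =
              ∑ m, (Γ m (R, g)) ^ 2 • outer2 (perp2 (η m)) ∧
          g = ∑ m, (Γ m (R, g)) • perp2 (η m)) := by
  obtain ⟨εu, hεu, K, ξ, hξ, A, hAcd, hApos, hAeq⟩ := geom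
  refine ⟨min εu 1, lt_min hεu one_pos, 4 + (K + K), ?_⟩
  set e : (Fin 4 ⊕ (Fin K ⊕ Fin K)) ≃ Fin (4 + (K + K)) :=
    (Equiv.sumCongr (Equiv.refl (Fin 4)) finSumFinEquiv).trans finSumFinEquiv with he
  have hunit : ∀ s, IsRationalUnit (eta0 ξ s) := by
    rintro (i | m' | m')
    · fin_cases i
      · exact show IsRationalUnit ![0,-1] from ⟨by norm_num, 0, -1, by norm_num, by norm_num⟩
      · exact show IsRationalUnit ![0,1] from ⟨by norm_num, 0, 1, by norm_num, by norm_num⟩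
      · exact show IsRationalUnit ![1,0] from ⟨by norm_num, 1, 0, by norm_num, by norm_num⟩
      · exact show IsRationalUnit ![-1,0] from ⟨by norm_num, -1, 0, by norm_num, by norm_num⟩
    · simpa [eta0] using hξ m'
    · obtain ⟨hu, q0, q1, hq0, hq1⟩ := hξ m'
      constructor
      · simp only [eta0, Sum.elim_inr, Pi.neg_apply, neg_sq]
        exact hu
      · exact ⟨-q0, -q1, by simp [eta0, hq0], by simp [eta0, hq1]⟩
  have hcd : ∀ s, ContDiff ℝ (⊤ : ℕ∞) (gam0 εu A s) := by
    rintro (i | m' | m')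
    · fin_cases i <;>
        simp only [gam0, Sum.elim_inl, Matrix.cons_val_zero, Matrix.cons_val_one,
          Matrix.head_cons, Matrix.cons_val_fin_one] <;>
        first
        | exact contDiff_phi.comp (cd_snd_apply 0)
        | exact contDiff_phi.comp (cd_snd_apply 0).neg
        | exact contDiff_phi.comp (cd_snd_apply 1)
        | exact contDiff_phi.comp (cd_snd_apply 1).neg
    all_goals
      simp only [gam0, Sum.elim_inr, Sum.elim_inl]
      exact (((cd_lam εu).div_const 2).sqrt
          (fun z => ne_of_gt (by have := lam'_pos hεu z.2; linarith))).mul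
        ((hAcd m').comp (cd_Rp hεu))
  have hgampos : ∀ s (R : M2') (g : V2'), R.IsSymm →
      ‖R - 1‖ < min εu 1 → 0 < gam0 εu A s (R, g) := by
    rintro (i | m' | m') R g hsym hlt
    · fin_cases i <;> simp [gam0] <;> exact phi_pos _
    all_goals
      simp only [gam0, Sum.elim_inr, Sum.elim_inl]
      exact mul_pos
        (Real.sqrt_pos.2 (by have := lam'_pos hεu g; linarith))
        (hApos m' _ (Rp'_symm hsym g) (norm_Rp' hεu g hlt))
  refine ⟨fun m => eta0 ξ (e.symm m), fun m => hunit (e.symm m),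
    fun m => gam0 εu A (e.symm m), fun z => pf' εu z.2,
    fun m => hcd (e.symm m), cd_pf εu,
    fun m R g hsym hlt => hgampos (e.symm m) R g hsym hlt, ?_⟩
  intro R g hsym hlt
  have hl : 0 < lam' εu g := lam'_pos hεu g
  have hl2 : 0 ≤ lam' εu g / 2 := by linarith
  have hRsymm' := Rp'_symm (εu := εu) hsym g
  have hRnorm' := norm_Rp' hεu g hlt
  have hgeo := hAeq (Rp' εu R g) hRsymm' hRnorm'
  have hco : ∀ m : Fin K,
      (Real.sqrt (lam' εu g / 2) * A m (Rp' εu R g)) ^ 2 =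
        (lam' εu g / 2) * (A m (Rp' εu R g)) ^ 2 := by
    intro m; rw [mul_pow, Real.sq_sqrt hl2]
  constructor
  · -- matrix identity
    show R - pf' εu g • 1 = ∑ m : Fin (4 + (K + K)),
      (gam0 εu A (e.symm m) (R, g)) ^ 2 • outer2 (perp2 (eta0 ξ (e.symm m)))
    have hmat : ∑ m : Fin (4 + (K + K)),
        (gam0 εu A (e.symm m) (R, g)) ^ 2 • outer2 (perp2 (eta0 ξ (e.symm m))) =
        ∑ s, (gam0 εu A s (R, g)) ^ 2 • outer2 (perp2 (eta0 ξ s)) :=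
      Equiv.sum_comp e.symm (fun s => (gam0 εu A s (R, g)) ^ 2 • outer2 (perp2 (eta0 ξ s)))
    rw [hmat, Fintype.sum_sum_type, Fintype.sum_sum_type]
    have h4 : (∑ i : Fin 4,
        (gam0 εu A (Sum.inl i) (R, g)) ^ 2 • outer2 (perp2 (eta0 ξ (Sum.inl i))))
        = Gmat' g := by
      rw [Fin.sum_univ_four]
      simp only [gam0, eta0, Sum.elim_inl]
      norm_num [op1, op2, op3, op4]
      ext i j
      fin_cases i <;> fin_cases j <;>
        simp [Gmat', Matrix.add_apply, Matrix.smul_apply, outer2, perp2] <;>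
        linarith [phi_sq (g 0), phi_sq (g 1)]
    have hKsum : (∑ m' : Fin K,
          (gam0 εu A (Sum.inr (Sum.inl m')) (R, g)) ^ 2 •
            outer2 (perp2 (eta0 ξ (Sum.inr (Sum.inl m'))))) +
        (∑ m' : Fin K,
          (gam0 εu A (Sum.inr (Sum.inr m')) (R, g)) ^ 2 •
            outer2 (perp2 (eta0 ξ (Sum.inr (Sum.inr m'))))) =
        lam' εu g • Rp' εu R g := by
      simp only [gam0, eta0, Sum.elim_inr, Sum.elim_inl, perp2_neg, outer2_neg, hco]
      rw [← Finset.sum_add_distrib]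
      have hterm : ∀ m' : Fin K,
          (lam' εu g / 2 * A m' (Rp' εu R g) ^ 2) • outer2 (perp2 (ξ m')) +
          (lam' εu g / 2 * A m' (Rp' εu R g) ^ 2) • outer2 (perp2 (ξ m')) =
          lam' εu g • (A m' (Rp' εu R g) ^ 2 • outer2 (perp2 (ξ m'))) := by
        intro m'
        rw [smul_smul, ← add_smul]
        congr 1
        ring
      simp_rw [hterm]
      rw [← Finset.smul_sum, ← hgeo]
    rw [h4, hKsum, reconstruct' hεu R g]
    abel
  · -- vector identity
    show g = ∑ m : Fin (4 + (K + K)),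
      (gam0 εu A (e.symm m) (R, g)) • perp2 (eta0 ξ (e.symm m))
    have hvec : ∑ m : Fin (4 + (K + K)),
        (gam0 εu A (e.symm m) (R, g)) • perp2 (eta0 ξ (e.symm m)) =
        ∑ s, (gam0 εu A s (R, g)) • perp2 (eta0 ξ s) :=
      Equiv.sum_comp e.symm (fun s => (gam0 εu A s (R, g)) • perp2 (eta0 ξ s))
    rw [hvec, Fintype.sum_sum_type, Fintype.sum_sum_type]
    have h4 : (∑ i : Fin 4, (gam0 εu A (Sum.inl i) (R, g)) • perp2 (eta0 ξ (Sum.inl i)))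
        = g := by
      rw [Fin.sum_univ_four]
      simp only [gam0, eta0, Sum.elim_inl]
      norm_num [pp1, pp2, pp3, pp4]
      funext i
      fin_cases i <;>
        simp [Pi.add_apply, Pi.smul_apply, smul_eq_mul, perp2, Matrix.vecHead, Matrix.vecTail] <;>
        linarith [phi_sub (g 0), phi_sub (g 1)]
    have hK : (∑ m' : Fin K,
          (gam0 εu A (Sum.inr (Sum.inl m')) (R, g)) •
            perp2 (eta0 ξ (Sum.inr (Sum.inl m')))) +
        (∑ m' : Fin K,
          (gam0 εu A (Sum.inr (Sum.inr m')) (R, g)) •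
            perp2 (eta0 ξ (Sum.inr (Sum.inr m')))) = 0 := by
      simp only [gam0, eta0, Sum.elim_inr, Sum.elim_inl, perp2_neg, smul_neg]
      rw [← Finset.sum_add_distrib]
      simp
    rw [h4, hK, add_zero]
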